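/- Let M = [A, B_1, ..., B_d] ∈ ℝ^{n×m} with rank(M) = r, rank(A) = r_A, rank(B_i) = r_{B_i}. Then for all permutation matrices P_1, ..., P_d ∈ 𝒫_n, rank([A, P_1 B_1, ..., P_d B_d]) ≤ min{n, m, r_A + Σ_i r_{B_i}, r + Σ_i (H(π_{P_i}) − C(π_{P_i}))}. -/

import Mathlib

/-!
Write `P_l B_l = B_l + (P_l - 1) B_l`, where `P_σ B` has rows `B(σ i)`. Every column of
`[A, P_1 B_1, …, P_d B_d]` then lies in the column space of `M` plus the column spaces of the
`(P_l - 1) B_l`, and rank is subadditive under sums and concatenations. The rows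
`B(σ i) - B(i)` of `(P_σ - 1) B` vanish off the support of `σ` and sum to zero, so for `σ ≠ 1`
its rank is below `H(σ)`; this settles cycles, and since
`(P_{στ} - 1) B = P_τ (P_σ - 1) B + (P_τ - 1) B`, induction over the disjoint cycle
decomposition gives `rank ((P_σ - 1) B) ≤ H(σ) - C(σ)`.
-/

open Matrix

/-- Hamming weight of a permutation: number of non-fixed points. -/
def hammingWeight {n : ℕ} (σ : Equiv.Perm (Fin n)) : ℕ := σ.support.card

/-- Cycle number: number of cycles of length ≥ 2 in the cycle decomposition. -/
def cycleNumber {n : ℕ} (σ : Equiv.Perm (Fin n)) : ℕ := Multiset.card σ.cycleType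

open Finset Module Submodule

theorem Submodule.finrank_finsetSup_le {K V ι : Type*} [DivisionRing K] [AddCommGroup V]
    [Module K V] [FiniteDimensional K V] (s : Finset ι) (W : ι → Submodule K V) :
    finrank K (s.sup W : Submodule K V) ≤ ∑ i ∈ s, finrank K (W i) := by
  classical
  induction s using Finset.induction with
  | empty => simp
  | insert a s ha ih =>
    rw [sup_insert, sum_insert ha]
    exact (finrank_add_le_finrank_add_finrank _ _).trans (add_le_add_right ih _)

namespace Matrix

/-- Horizontal concatenation `[B_1, …, B_d]` of a family of matrices with the same rows. -/
def sigmaCols {α m ι : Type*} {κ : ι → Type*} (B : ∀ l, Matrix m (κ l) α) :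
    Matrix m (Σ l, κ l) α :=
  of fun i p => B p.1 i p.2

variable {K m n : Type*} [Field K] [Fintype m] [Fintype n]

theorem rank_le_finrank_of_forall_col_mem {A : Matrix m n K}
    {W : Submodule K (m → K)} (h : ∀ j, A.col j ∈ W) : A.rank ≤ finrank K W := by
  rw [rank_eq_finrank_span_cols]
  exact finrank_mono (span_le.mpr (Set.range_subset_iff.mpr h))

theorem rank_fromCols_le {n₁ n₂ : Type*} [Fintype n₁] [Fintype n₂] (A : Matrix m n₁ K)
    (B : Matrix m n₂ K) : (fromCols A B).rank ≤ A.rank + B.rank := by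
  rw [rank_eq_finrank_span_cols A, rank_eq_finrank_span_cols B]
  refine (rank_le_finrank_of_forall_col_mem ?_).trans (finrank_add_le_finrank_add_finrank _ _)
  rintro (j | j)
  · exact mem_sup_left (subset_span ⟨j, rfl⟩)
  · exact mem_sup_right (subset_span ⟨j, rfl⟩)

theorem rank_add_le (A B : Matrix m n K) : (A + B).rank ≤ A.rank + B.rank := by
  rw [rank_eq_finrank_span_cols A, rank_eq_finrank_span_cols B]
  refine (rank_le_finrank_of_forall_col_mem fun j => ?_).trans
    (finrank_add_le_finrank_add_finrank _ _)
  exact add_mem (mem_sup_left (subset_span ⟨j, rfl⟩)) (mem_sup_right (subset_span ⟨j, rfl⟩))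

theorem rank_sigmaCols_le {ι : Type*} {κ : ι → Type*} [Fintype ι] [∀ l, Fintype (κ l)]
    (B : ∀ l, Matrix m (κ l) K) : (sigmaCols B).rank ≤ ∑ l, (B l).rank := by
  classical
  simp_rw [rank_eq_finrank_span_cols (B _)]
  refine (rank_le_finrank_of_forall_col_mem (W := univ.sup fun l => span K (Set.range (B l).col))
    ?_).trans (finrank_finsetSup_le _ _)
  rintro ⟨l, j⟩
  exact le_sup (f := fun l => span K (Set.range (B l).col)) (mem_univ l) (subset_span ⟨j, rfl⟩)

theorem rank_lt_card_of_sum_rows_eq_zero {A : Matrix m n K} {s : Finset m} {x : m} (hx : x ∈ s)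
    (hA : ∀ i ∉ s, A.row i = 0) (hsum : ∑ i, A.row i = 0) : A.rank < #s := by
  classical
  set W := span K (Set.range fun i : s.erase x => A.row i)
  have hrow : ∀ i ≠ x, A.row i ∈ W := fun i hix => by
    by_cases hi : i ∈ s
    · exact subset_span ⟨⟨i, mem_erase.mpr ⟨hix, hi⟩⟩, rfl⟩
    · rw [hA i hi]; exact zero_mem W
  have hrowx : A.row x ∈ W := by
    rw [← add_sum_erase univ A.row (mem_univ x), add_eq_zero_iff_eq_neg] at hsum
    rw [hsum]
    exact neg_mem (sum_mem fun i hi => hrow i (ne_of_mem_erase hi))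
  calc A.rank ≤ finrank K W := by
        rw [rank_eq_finrank_span_row]
        refine finrank_mono (span_le.mpr (Set.range_subset_iff.mpr fun i => ?_))
        by_cases hix : i = x
        · exact hix ▸ hrowx
        · exact hrow i hix
    _ ≤ #(s.erase x) := (finrank_range_le_card (R := K) fun i : s.erase x => A.row i).trans_eq
          (Fintype.card_coe _)
    _ < #s := card_erase_lt_of_mem hx

open Equiv

theorem rank_submatrix_perm_sub_self_lt [DecidableEq m] {σ : Perm m} (hσ : σ ≠ 1)
    (B : Matrix m n K) : (B.submatrix σ id - B).rank < #σ.support := by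
  obtain ⟨x, hx⟩ := nonempty_of_ne_empty (mt Perm.support_eq_empty_iff.mp hσ)
  refine rank_lt_card_of_sum_rows_eq_zero hx (fun i hi => ?_) ?_
  · ext j
    simp [Perm.notMem_support.mp hi]
  · ext j
    simp [Equiv.sum_comp σ (B · j)]

theorem rank_submatrix_mul_sub_self_le (σ τ : Perm m) (B : Matrix m n K) :
    (B.submatrix (σ * τ) id - B).rank ≤
      (B.submatrix σ id - B).rank + (B.submatrix τ id - B).rank := by
  have h : B.submatrix (σ * τ) id - B =
      (B.submatrix σ id - B).submatrix τ (Equiv.refl n) + (B.submatrix τ id - B) := by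
    ext i j
    simp
  rw [h, ← rank_submatrix (B.submatrix σ id - B) τ (Equiv.refl n)]
  exact rank_add_le _ _

theorem rank_submatrix_perm_sub_self_add_card_cycleType_le [DecidableEq m] (σ : Perm m)
    (B : Matrix m n K) :
    (B.submatrix σ id - B).rank + Multiset.card σ.cycleType ≤ #σ.support := by
  induction σ using Perm.cycle_induction_on with
  | base_one => simp
  | base_cycles c hc =>
    rw [hc.cycleType, Multiset.card_singleton]
    exact rank_submatrix_perm_sub_self_lt hc.ne_one B
  | induction_disjoint σ τ hd _ hσ hτ =>
    rw [hd.cycleType_mul, hd.card_support_mul, Multiset.card_add]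
    have := rank_submatrix_mul_sub_self_le σ τ B
    omega

end Matrix

/-- For `M = [A, B_1, ..., B_d]` with `rank M = r`, `rank A = r_A`, `rank B_l = r_{B_l}`,
and any permutation matrices `P_1, ..., P_d`,
`rank [A, P_1 B_1, ..., P_d B_d] ≤ min {n, m, r_A + Σ r_{B_l}, r + Σ (H(π_{P_l}) − C(π_{P_l}))}`. -/
theorem rank_multi_perm_concat_le {n mA d m r rA : ℕ} {mB : Fin d → ℕ}
    (A : Matrix (Fin n) (Fin mA) ℝ) (B : ∀ l : Fin d, Matrix (Fin n) (Fin (mB l)) ℝ)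
    (rB : Fin d → ℕ)
    (hm : m = mA + ∑ l, mB l)
    (hr : (Matrix.of fun i (j : Fin mA ⊕ (Σ l : Fin d, Fin (mB l))) =>
      Sum.elim (A i) (fun p => B p.1 i p.2) j).rank = r)
    (hrA : A.rank = rA) (hrB : ∀ l, (B l).rank = rB l)
    (σ : Fin d → Equiv.Perm (Fin n)) :
    (Matrix.of fun i (j : Fin mA ⊕ (Σ l : Fin d, Fin (mB l))) =>
        Sum.elim (A i) (fun p => B p.1 (σ p.1 i) p.2) j).rank ≤
      min (min n m)
        (min (rA + ∑ l, rB l) (r + ∑ l, (hammingWeight (σ l) - cycleNumber (σ l)))) := by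
  change (fromCols A (sigmaCols fun l => (B l).submatrix (σ l) id)).rank ≤ _
  change (fromCols A (sigmaCols B)).rank = r at hr
  have hsplit : fromCols A (sigmaCols fun l => (B l).submatrix (σ l) id) =
      fromCols A (sigmaCols B) +
        fromCols 0 (sigmaCols fun l => (B l).submatrix (σ l) id - B l) := by
    ext i (j | ⟨l, j⟩) <;> simp [sigmaCols]
  have hdiff (l : Fin d) :
      ((B l).submatrix (σ l) id - B l).rank ≤ hammingWeight (σ l) - cycleNumber (σ l) := by
    have := rank_submatrix_perm_sub_self_add_card_cycleType_le (σ l) (B l)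
    unfold hammingWeight cycleNumber
    omega
  refine le_min (le_min ?_ ?_) (le_min ?_ ?_)
  · exact (rank_le_card_height _).trans_eq (Fintype.card_fin n)
  · exact (rank_le_card_width _).trans_eq (by simp [hm])
  · have hperm (l : Fin d) : ((B l).submatrix (σ l) id).rank = rB l :=
      (rank_submatrix (B l) (σ l) (Equiv.refl _)).trans (hrB l)
    calc _ ≤ A.rank + ∑ l, ((B l).submatrix (σ l) id).rank :=
          (rank_fromCols_le _ _).trans (Nat.add_le_add_left (rank_sigmaCols_le _) _)
      _ = rA + ∑ l, rB l := by simp only [hrA, hperm]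
  · rw [hsplit]
    calc _ ≤ r + ((0 : Matrix (Fin n) (Fin mA) ℝ).rank +
              ∑ l, ((B l).submatrix (σ l) id - B l).rank) := by
          refine (rank_add_le _ _).trans ?_
          rw [hr]
          exact Nat.add_le_add_left
            ((rank_fromCols_le _ _).trans (Nat.add_le_add_left (rank_sigmaCols_le _) _)) _
      _ ≤ r + ∑ l, (hammingWeight (σ l) - cycleNumber (σ l)) := by
          rw [rank_zero, zero_add]
          gcongr with l
          exact hdiff l
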